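/- Let Q = ([0,1],&,1) with & a continuous t-norm and let A be a D(Q)-category. Every weight φ on A generated by a biCauchy net {x_λ} is a Cauchy weight: the coweight ψ generated by {x_λ} is left adjoint to φ, i.e., ψ∘φ ≤ A and φ∘ψ ≥ tφ. -/

import Mathlib

/-!
The generated weight `φ`, coweight `ψ` and type `a` are tail-liminfs along the net, and `a` is
the limit `L` of `A(x_μ, x_ν)`. Divisibility of a continuous t-norm turns the D(Q)-axiom at
`x_μ` into `(a → ψ(v)) & A(u, x_μ) ≤ A(u, v)` up to an error that uniform continuity of `&`
makes small once `A(x_μ, x_μ)` is close to `a` and `A(x_μ, v)` is not far below `ψ(v)`; letting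
`μ` grow gives `ψ ∘ φ ≤ A`. For `a ≤ φ ∘ ψ` it suffices to evaluate at `x_N` for `N` large,
where `φ(x_N)`, `ψ(x_N)` and `A(x_N, x_N)` are all close to `a`, so that
`(A(x_N, x_N) → φ(x_N)) & ψ(x_N) ≈ (A(x_N, x_N) → φ(x_N)) & A(x_N, x_N) = φ(x_N) ≈ a`.
-/

noncomputable def tres (f : ℝ → ℝ → ℝ) (x y : ℝ) : ℝ :=
  sSup {z | z ∈ Set.Icc (0:ℝ) 1 ∧ f x z ≤ y}

def IsContTNorm (f : ℝ → ℝ → ℝ) : Prop :=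
  (∀ a ∈ Set.Icc (0:ℝ) 1, ∀ b ∈ Set.Icc (0:ℝ) 1, f a b ∈ Set.Icc (0:ℝ) 1) ∧
  ContinuousOn (fun p : ℝ × ℝ => f p.1 p.2) (Set.Icc 0 1 ×ˢ Set.Icc 0 1) ∧
  (∀ a ∈ Set.Icc (0:ℝ) 1, ∀ b ∈ Set.Icc (0:ℝ) 1, f a b = f b a) ∧
  (∀ a ∈ Set.Icc (0:ℝ) 1, ∀ b ∈ Set.Icc (0:ℝ) 1, ∀ c ∈ Set.Icc (0:ℝ) 1,
    f (f a b) c = f a (f b c)) ∧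
  (∀ a ∈ Set.Icc (0:ℝ) 1, ∀ b ∈ Set.Icc (0:ℝ) 1, ∀ c ∈ Set.Icc (0:ℝ) 1,
    a ≤ b → f a c ≤ f b c) ∧
  (∀ a ∈ Set.Icc (0:ℝ) 1, f a 1 = a)

/-- A D(Q)-category (ordered fuzzy set) valued in `([0,1], f, 1)`. -/
def IsDCat {α : Type*} (f : ℝ → ℝ → ℝ) (A : α → α → ℝ) : Prop :=
  (∀ x y, A x y ∈ Set.Icc (0:ℝ) 1) ∧
  (∀ x y, A x y ≤ min (A x x) (A y y)) ∧
  (∀ x y z, f (tres f (A y y) (A y z)) (A x y) ≤ A x z)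

/-- A net is forward Cauchy if `lim_{ν ≥ μ} A(x_μ, x_ν)` exists. -/
def FwdCauchy {α : Type*} {Λ : Type*} [Preorder Λ] (A : α → α → ℝ) (x : Λ → α) : Prop :=
  ∃ L : ℝ, Filter.Tendsto (fun q : Λ × Λ => A (x q.1) (x q.2))
    (Filter.atTop ⊓ Filter.principal {q : Λ × Λ | q.1 ≤ q.2}) (nhds L)

/-- A net is biCauchy if `lim_{μ,ν} A(x_μ, x_ν)` exists. -/
def BiCauchy {α : Type*} {Λ : Type*} [Preorder Λ] (A : α → α → ℝ) (x : Λ → α) : Prop :=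
  ∃ L : ℝ, Filter.Tendsto (fun q : Λ × Λ => A (x q.1) (x q.2)) Filter.atTop (nhds L)

/-- The type `⋁_λ ⋀_{μ ≥ λ} A(x_μ, x_μ)` of a net. -/
noncomputable def genType {α : Type*} {Λ : Type*} [Preorder Λ]
    (A : α → α → ℝ) (x : Λ → α) : ℝ :=
  ⨆ l : Λ, ⨅ σ : {σ : Λ // l ≤ σ}, A (x σ.1) (x σ.1)

/-- The weight `⋁_λ ⋀_{μ ≥ λ} A(−, x_μ)` generated by a net. -/
noncomputable def genWeight {α : Type*} {Λ : Type*} [Preorder Λ]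
    (A : α → α → ℝ) (x : Λ → α) : α → ℝ :=
  fun u => ⨆ l : Λ, ⨅ σ : {σ : Λ // l ≤ σ}, A u (x σ.1)

/-- The coweight `⋁_λ ⋀_{μ ≥ λ} A(x_μ, −)` generated by a net. -/
noncomputable def genCoweight {α : Type*} {Λ : Type*} [Preorder Λ]
    (A : α → α → ℝ) (x : Λ → α) : α → ℝ :=
  fun v => ⨆ l : Λ, ⨅ σ : {σ : Λ // l ≤ σ}, A (x σ.1) v

/-- `s` is a Yoneda limit of the net `x`. -/
noncomputable def YonedaLim {α : Type*} {Λ : Type*} [Preorder Λ]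
    (A : α → α → ℝ) (x : Λ → α) (s : α) : Prop :=
  A s s = genType A x ∧ ∀ y, A s y = genCoweight A x y

open Set Filter Topology

local notation "𝕀" => Icc (0:ℝ) 1

namespace IsContTNorm

variable {f : ℝ → ℝ → ℝ} {a b c : ℝ}

theorem mem (ht : IsContTNorm f) (ha : a ∈ 𝕀) (hb : b ∈ 𝕀) : f a b ∈ 𝕀 :=
  ht.1 a ha b hb

theorem comm (ht : IsContTNorm f) (ha : a ∈ 𝕀) (hb : b ∈ 𝕀) : f a b = f b a :=
  ht.2.2.1 a ha b hb

theorem assoc (ht : IsContTNorm f) (ha : a ∈ 𝕀) (hb : b ∈ 𝕀) (hc : c ∈ 𝕀) :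
    f (f a b) c = f a (f b c) :=
  ht.2.2.2.1 a ha b hb c hc

theorem mono_left (ht : IsContTNorm f) (ha : a ∈ 𝕀) (hb : b ∈ 𝕀) (hc : c ∈ 𝕀) (hab : a ≤ b) :
    f a c ≤ f b c :=
  ht.2.2.2.2.1 a ha b hb c hc hab

theorem mono_right (ht : IsContTNorm f) (ha : a ∈ 𝕀) (hb : b ∈ 𝕀) (hc : c ∈ 𝕀) (hbc : b ≤ c) :
    f a b ≤ f a c := by
  rw [ht.comm ha hb, ht.comm ha hc]
  exact ht.mono_left hb hc ha hbc

theorem mul_one (ht : IsContTNorm f) (ha : a ∈ 𝕀) : f a 1 = a :=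
  ht.2.2.2.2.2 a ha

theorem mul_zero (ht : IsContTNorm f) (ha : a ∈ 𝕀) : f a 0 = 0 := by
  have h0 : (0:ℝ) ∈ 𝕀 := left_mem_Icc.2 zero_le_one
  have h1 : (1:ℝ) ∈ 𝕀 := right_mem_Icc.2 zero_le_one
  refine le_antisymm ?_ (ht.mem ha h0).1
  calc f a 0 ≤ f 1 0 := ht.mono_left ha h1 h0 ha.2
    _ = 0 := by rw [ht.comm h1 h0, ht.mul_one h0]

theorem continuousOn_right (ht : IsContTNorm f) (ha : a ∈ 𝕀) : ContinuousOn (f a) 𝕀 :=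
  ht.2.1.comp (f := fun z => (a, z)) (by fun_prop) fun _ hz => ⟨ha, hz⟩

theorem isCompact_tres_set (ht : IsContTNorm f) (ha : a ∈ 𝕀) :
    IsCompact {z | z ∈ 𝕀 ∧ f a z ≤ c} :=
  isCompact_Icc.of_isClosed_subset
    ((ht.continuousOn_right ha).preimage_isClosed_of_isClosed isClosed_Icc isClosed_Iic)
    inter_subset_left

theorem tres_mem_and_mul_tres_le (ht : IsContTNorm f) (ha : a ∈ 𝕀) (hc : 0 ≤ c) :
    tres f a c ∈ 𝕀 ∧ f a (tres f a c) ≤ c :=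
  (ht.isCompact_tres_set ha).sSup_mem ⟨0, left_mem_Icc.2 zero_le_one, (ht.mul_zero ha).trans_le hc⟩

theorem tres_mem (ht : IsContTNorm f) (ha : a ∈ 𝕀) (hc : 0 ≤ c) : tres f a c ∈ 𝕀 :=
  (ht.tres_mem_and_mul_tres_le ha hc).1

/-- Divisibility, by the intermediate value theorem. -/
theorem mul_tres_of_le (ht : IsContTNorm f) (ha : a ∈ 𝕀) (hc : c ∈ 𝕀) (hca : c ≤ a) :
    f a (tres f a c) = c := by
  refine le_antisymm (ht.tres_mem_and_mul_tres_le ha hc.1).2 ?_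
  obtain ⟨p, hp, hfp⟩ : ∃ p ∈ 𝕀, f a p = c :=
    intermediate_value_Icc zero_le_one (ht.continuousOn_right ha)
      (by rw [ht.mul_zero ha, ht.mul_one ha]; exact ⟨hc.1, hca⟩)
  have hp_le : p ≤ tres f a c := le_csSup (ht.isCompact_tres_set ha).bddAbove ⟨hp, hfp.le⟩
  exact hfp.symm.le.trans (ht.mono_right ha hp (ht.tres_mem ha hc.1) hp_le)

theorem tres_mul_of_le (ht : IsContTNorm f) (ha : a ∈ 𝕀) (hc : c ∈ 𝕀) (hca : c ≤ a) :
    f (tres f a c) a = c := by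
  rw [ht.comm (ht.tres_mem ha hc.1) ha, ht.mul_tres_of_le ha hc hca]

theorem exists_modulus (ht : IsContTNorm f) {ε : ℝ} (hε : 0 < ε) :
    ∃ δ > 0, ∀ a ∈ 𝕀, ∀ b ∈ 𝕀, ∀ b' ∈ 𝕀, |b - b'| ≤ δ → f a b ≤ f a b' + ε := by
  have huc := (isCompact_Icc.prod isCompact_Icc).uniformContinuousOn_of_continuous ht.2.1
  obtain ⟨δ, hδ, h⟩ := Metric.uniformContinuousOn_iff.1 huc ε hε
  refine ⟨δ / 2, half_pos hδ, fun a ha b hb b' hb' hbb' => ?_⟩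
  have hdist : dist (a, b) (a, b') < δ := by
    rw [Prod.dist_eq, dist_self, Real.dist_eq, max_eq_right (abs_nonneg _)]
    linarith
  have := (abs_lt.1 (Real.dist_eq _ _ ▸ h (a, b) ⟨ha, hb⟩ (a, b') ⟨ha, hb'⟩ hdist)).2
  linarith

end IsContTNorm

namespace IsDCat

variable {f : ℝ → ℝ → ℝ} {α : Type*} {A : α → α → ℝ}

theorem mem (hA : IsDCat f A) (x y : α) : A x y ∈ 𝕀 := hA.1 x y

theorem le_diag_left (hA : IsDCat f A) (x y : α) : A x y ≤ A x x :=
  (hA.2.1 x y).trans (min_le_left _ _)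

theorem le_diag_right (hA : IsDCat f A) (x y : α) : A x y ≤ A y y :=
  (hA.2.1 x y).trans (min_le_right _ _)

theorem tres_diag_mul_le (hA : IsDCat f A) (x y z : α) :
    f (tres f (A y y) (A y z)) (A x y) ≤ A x z :=
  hA.2.2 x y z

/-- Approximate form of the axiom `z & A(y,y) ≤ A(y,v) → z & A(u,y) ≤ A(u,v)`, with the error
controlled by a modulus of continuity of the t-norm. Divisibility writes `A(u,y) = A(y,y) & p`,
so that `z & A(u,y) = (z & A(y,y)) & p`. -/
theorem mul_le_add_of_mul_diag_le_add (hA : IsDCat f A) (ht : IsContTNorm f) {ε δ : ℝ}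
    (hδ : 0 ≤ δ) (hmod : ∀ a ∈ 𝕀, ∀ b ∈ 𝕀, ∀ b' ∈ 𝕀, |b - b'| ≤ δ → f a b ≤ f a b' + ε)
    {z : ℝ} (hz : z ∈ 𝕀) {u y v : α} (h : f z (A y y) ≤ A y v + δ) :
    f z (A u y) ≤ A u v + ε := by
  set p := tres f (A y y) (A u y)
  set w := tres f (A y y) (A y v)
  have hp : p ∈ 𝕀 := ht.tres_mem (hA.mem y y) (hA.mem u y).1
  have hw : w ∈ 𝕀 := ht.tres_mem (hA.mem y y) (hA.mem y v).1
  have hpq : f (A y y) p = A u y :=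
    ht.mul_tres_of_le (hA.mem y y) (hA.mem u y) (hA.le_diag_right u y)
  have hwc : f w (A y y) = A y v :=
    ht.tres_mul_of_le (hA.mem y y) (hA.mem y v) (hA.le_diag_left y v)
  have hzb : f z (A y y) ∈ 𝕀 := ht.mem hz (hA.mem y y)
  have hc' : max (A y v) (f z (A y y)) ∈ 𝕀 := ⟨(hA.mem y v).1.trans (le_max_left _ _),
    max_le (hA.mem y v).2 hzb.2⟩
  have hc'c : |max (A y v) (f z (A y y)) - A y v| ≤ δ := by
    rw [abs_of_nonneg (sub_nonneg.2 (le_max_left _ _))]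
    exact sub_le_iff_le_add'.2 (max_le (by linarith) (by linarith))
  calc f z (A u y) = f (f z (A y y)) p := by rw [← hpq, ht.assoc hz (hA.mem y y) hp]
    _ ≤ f (max (A y v) (f z (A y y))) p := ht.mono_left hzb hc' hp (le_max_right _ _)
    _ = f p (max (A y v) (f z (A y y))) := ht.comm hc' hp
    _ ≤ f p (A y v) + ε := hmod p hp _ hc' _ (hA.mem y v) hc'c
    _ = f w (A u y) + ε := by rw [ht.comm hp (hA.mem y v), ← hwc, ← hpq,
        ht.assoc hw (hA.mem y y) hp]
    _ ≤ A u v + ε := by gcongr; exact hA.tres_diag_mul_le u y v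

end IsDCat

/-- The generated type, weight and coweight are, by definition, `tailLiminf` of `A(x_μ, x_μ)`,
`A(-, x_μ)` and `A(x_μ, -)`. -/
noncomputable def tailLiminf {Λ : Type*} [Preorder Λ] (g : Λ → ℝ) : ℝ :=
  ⨆ l : Λ, ⨅ σ : {σ : Λ // l ≤ σ}, g σ.1

section tailLiminf

variable {Λ : Type*} [SemilatticeSup Λ] {g h : Λ → ℝ}

theorem bddBelow_tail (hg : ∀ σ, g σ ∈ 𝕀) (l : Λ) :
    BddBelow (range fun σ : {σ : Λ // l ≤ σ} => g σ.1) :=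
  ⟨0, forall_mem_range.2 fun σ => (hg σ.1).1⟩

theorem tailInf_le (hg : ∀ σ, g σ ∈ 𝕀) {l σ : Λ} (hσ : l ≤ σ) :
    ⨅ τ : {τ : Λ // l ≤ τ}, g τ.1 ≤ g σ :=
  ciInf_le (bddBelow_tail hg l) ⟨σ, hσ⟩

theorem bddAbove_tailInf (hg : ∀ σ, g σ ∈ 𝕀) :
    BddAbove (range fun l : Λ => ⨅ σ : {σ : Λ // l ≤ σ}, g σ.1) :=
  ⟨1, forall_mem_range.2 fun l => (tailInf_le hg le_rfl).trans (hg l).2⟩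

theorem tailLiminf_mono (hg : ∀ σ, g σ ∈ 𝕀) (hh : ∀ σ, h σ ∈ 𝕀) (hgh : ∀ σ, g σ ≤ h σ) :
    tailLiminf g ≤ tailLiminf h :=
  ciSup_mono (bddAbove_tailInf hh) fun _ => ciInf_mono (bddBelow_tail hg _) fun σ => hgh σ.1

variable [Nonempty Λ]

theorem le_tailLiminf (hg : ∀ σ, g σ ∈ 𝕀) {B : ℝ} (hB : ∀ᶠ σ in atTop, B ≤ g σ) :
    B ≤ tailLiminf g := by
  obtain ⟨N, hN⟩ := eventually_atTop.1 hB
  have : Nonempty {σ : Λ // N ≤ σ} := ⟨⟨N, le_rfl⟩⟩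
  exact (le_ciInf fun σ : {σ : Λ // N ≤ σ} => hN σ.1 σ.2).trans (le_ciSup (bddAbove_tailInf hg) N)

theorem tailLiminf_le (hg : ∀ σ, g σ ∈ 𝕀) {B : ℝ} (hB : ∀ᶠ σ in atTop, g σ ≤ B) :
    tailLiminf g ≤ B := by
  obtain ⟨N, hN⟩ := eventually_atTop.1 hB
  exact ciSup_le fun l => (tailInf_le hg (le_sup_left (b := N))).trans (hN _ le_sup_right)

theorem tailLiminf_mem (hg : ∀ σ, g σ ∈ 𝕀) : tailLiminf g ∈ 𝕀 :=
  ⟨le_tailLiminf hg (.of_forall fun σ => (hg σ).1),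
    tailLiminf_le hg (.of_forall fun σ => (hg σ).2)⟩

theorem eventually_tailLiminf_sub_le (hg : ∀ σ, g σ ∈ 𝕀) {δ : ℝ} (hδ : 0 < δ) :
    ∀ᶠ σ in atTop, tailLiminf g - δ ≤ g σ := by
  obtain ⟨l, hl⟩ := exists_lt_of_lt_ciSup (sub_lt_self (tailLiminf g) hδ)
  exact eventually_atTop.2 ⟨l, fun σ hσ => hl.le.trans (tailInf_le hg hσ)⟩

theorem tailLiminf_eq_of_tendsto (hg : ∀ σ, g σ ∈ 𝕀) {L : ℝ} (hL : Tendsto g atTop (𝓝 L)) :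
    tailLiminf g = L := by
  refine le_antisymm (le_of_forall_pos_le_add fun δ hδ => ?_)
    (le_of_forall_pos_le_add fun δ hδ => ?_)
  · exact tailLiminf_le hg (hL.eventually (Iic_mem_nhds (lt_add_of_pos_right L hδ)))
  · exact sub_le_iff_le_add.1 <|
      le_tailLiminf hg (hL.eventually (Ici_mem_nhds (sub_lt_self L hδ)))

end tailLiminf

theorem exists_forall_abs_sub_le_of_tendsto {Λ : Type*} [SemilatticeSup Λ] [Nonempty Λ]
    {F : Λ × Λ → ℝ} {L : ℝ} (hF : Tendsto F atTop (𝓝 L)) {η : ℝ} (hη : 0 < η) :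
    ∃ N, ∀ σ τ, N ≤ σ → N ≤ τ → |F (σ, τ) - L| ≤ η := by
  obtain ⟨⟨N₁, N₂⟩, hN⟩ := eventually_atTop.1 (hF.eventually (Metric.closedBall_mem_nhds L hη))
  exact ⟨N₁ ⊔ N₂, fun σ τ hσ hτ =>
    hN (σ, τ) ⟨le_sup_left.trans hσ, le_sup_right.trans hτ⟩⟩

namespace IsDCat

variable {f : ℝ → ℝ → ℝ} {α : Type*} {A : α → α → ℝ} {Λ : Type*} [SemilatticeSup Λ] {x : Λ → α}

theorem genCoweight_le_genType (hA : IsDCat f A) (v : α) : genCoweight A x v ≤ genType A x :=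
  tailLiminf_mono (fun _ => hA.mem _ _) (fun _ => hA.mem _ _) fun σ => hA.le_diag_left (x σ) v

variable [Nonempty Λ]

theorem genWeight_mem (hA : IsDCat f A) (u : α) : genWeight A x u ∈ 𝕀 :=
  tailLiminf_mem fun _ => hA.mem _ _

theorem genCoweight_mem (hA : IsDCat f A) (v : α) : genCoweight A x v ∈ 𝕀 :=
  tailLiminf_mem fun _ => hA.mem _ _

theorem genWeight_le_diag (hA : IsDCat f A) (u : α) : genWeight A x u ≤ A u u :=
  tailLiminf_le (fun _ => hA.mem _ _) (.of_forall fun σ => hA.le_diag_left u (x σ))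

theorem genType_eq_of_tendsto (hA : IsDCat f A) {L : ℝ}
    (hL : Tendsto (fun σ => A (x σ) (x σ)) atTop (𝓝 L)) : genType A x = L :=
  tailLiminf_eq_of_tendsto (fun _ => hA.mem _ _) hL

/-- `ψ ∘ φ ≤ A`. -/
theorem genCoweight_comp_genWeight_le (hA : IsDCat f A) (ht : IsContTNorm f) {L : ℝ}
    (hdiag : Tendsto (fun σ => A (x σ) (x σ)) atTop (𝓝 L)) (u v : α) :
    f (tres f (genType A x) (genCoweight A x v)) (genWeight A x u) ≤ A u v := by
  have htype := hA.genType_eq_of_tendsto hdiag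
  have hL : L ∈ 𝕀 := htype ▸ tailLiminf_mem fun _ => hA.mem _ _
  have hψL : genCoweight A x v ≤ L := htype ▸ hA.genCoweight_le_genType v
  rw [htype]
  set z := tres f L (genCoweight A x v)
  have hz : z ∈ 𝕀 := ht.tres_mem hL (hA.genCoweight_mem v).1
  have hzL : f z L = genCoweight A x v := ht.tres_mul_of_le hL (hA.genCoweight_mem v) hψL
  refine le_of_forall_pos_le_add fun ε hε => ?_
  obtain ⟨δ, hδ, hmod⟩ := ht.exists_modulus (half_pos hε)
  obtain ⟨η, hη, hmodη⟩ := ht.exists_modulus (half_pos hδ)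
  have hb : ∀ᶠ σ in atTop, |A (x σ) (x σ) - L| ≤ η :=
    hdiag.eventually (Metric.closedBall_mem_nhds L hη)
  have hc := eventually_tailLiminf_sub_le (g := fun σ => A (x σ) v) (fun _ => hA.mem _ _)
    (half_pos hδ)
  have hq := eventually_tailLiminf_sub_le (g := fun σ => A u (x σ)) (fun _ => hA.mem _ _) hδ
  obtain ⟨σ, hbσ, hcσ, hqσ⟩ := (hb.and (hc.and hq)).exists
  have hzq : f z (A u (x σ)) ≤ A u v + ε / 2 := by
    refine hA.mul_le_add_of_mul_diag_le_add ht hδ.le hmod hz ?_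
    have := hmodη z hz _ (hA.mem _ _) L hL hbσ
    change genCoweight A x v - δ / 2 ≤ A (x σ) v at hcσ
    linarith
  have hφq : |genWeight A x u - min (A u (x σ)) (genWeight A x u)| ≤ δ := by
    change genWeight A x u - δ ≤ A u (x σ) at hqσ
    rw [abs_of_nonneg (sub_nonneg.2 (min_le_right _ _))]
    exact sub_le_comm.1 (le_min hqσ (by linarith))
  have hmin : min (A u (x σ)) (genWeight A x u) ∈ 𝕀 :=
    ⟨le_min (hA.mem _ _).1 (hA.genWeight_mem u).1, (min_le_left _ _).trans (hA.mem _ _).2⟩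
  calc f z (genWeight A x u) ≤ f z (min (A u (x σ)) (genWeight A x u)) + ε / 2 :=
        hmod z hz _ (hA.genWeight_mem u) _ hmin hφq
    _ ≤ f z (A u (x σ)) + ε / 2 := by
        gcongr; exact ht.mono_right hz hmin (hA.mem _ _) (min_le_left _ _)
    _ ≤ A u v + ε := by linarith

/-- `a ≤ φ ∘ ψ`. -/
theorem genType_le_genWeight_comp_genCoweight (hA : IsDCat f A) (ht : IsContTNorm f) {L : ℝ}
    (hL : Tendsto (fun q : Λ × Λ => A (x q.1) (x q.2)) atTop (𝓝 L)) :
    genType A x ≤ ⨆ u : α, f (tres f (A u u) (genWeight A x u)) (genCoweight A x u) := by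
  have htype := hA.genType_eq_of_tendsto (hL.comp tendsto_atTop_diagonal)
  have hbdd : BddAbove (range fun u => f (tres f (A u u) (genWeight A x u)) (genCoweight A x u)) :=
    ⟨1, forall_mem_range.2 fun u =>
      (ht.mem (ht.tres_mem (hA.mem u u) (hA.genWeight_mem u).1) (hA.genCoweight_mem u)).2⟩
  rw [htype]
  refine le_of_forall_pos_le_add fun ε hε => ?_
  obtain ⟨δ, hδ, hmod⟩ := ht.exists_modulus (half_pos hε)
  set η := min (δ / 2) (ε / 2)
  obtain ⟨N, hN⟩ := exists_forall_abs_sub_le_of_tendsto hL (lt_min (half_pos hδ) (half_pos hε))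
  have hclose (σ τ : Λ) (hσ : N ≤ σ) (hτ : N ≤ τ) :
      L - η ≤ A (x σ) (x τ) ∧ A (x σ) (x τ) ≤ L + η := by
    have := abs_le.1 (hN σ τ hσ hτ)
    constructor <;> linarith [this.1, this.2]
  set u := x N
  have hφu : L - η ≤ genWeight A x u := le_tailLiminf (fun _ => hA.mem _ _)
    (eventually_atTop.2 ⟨N, fun σ hσ => (hclose N σ le_rfl hσ).1⟩)
  have hψu : L - η ≤ genCoweight A x u := le_tailLiminf (fun _ => hA.mem _ _)
    (eventually_atTop.2 ⟨N, fun σ hσ => (hclose σ N hσ le_rfl).1⟩)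
  have hψL : genCoweight A x u ≤ L := htype ▸ hA.genCoweight_le_genType u
  have huu := hclose N N le_rfl le_rfl
  set r := tres f (A u u) (genWeight A x u)
  have hr : r ∈ 𝕀 := ht.tres_mem (hA.mem u u) (hA.genWeight_mem u).1
  have hkey : genWeight A x u ≤ f r (genCoweight A x u) + ε / 2 :=
    calc genWeight A x u = f r (A u u) :=
          (ht.tres_mul_of_le (hA.mem u u) (hA.genWeight_mem u) (hA.genWeight_le_diag u)).symm
      _ ≤ f r (genCoweight A x u) + ε / 2 :=
          hmod r hr _ (hA.mem u u) _ (hA.genCoweight_mem u)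
            (abs_le.2 ⟨by linarith [min_le_left (δ / 2) (ε / 2)],
              by linarith [min_le_left (δ / 2) (ε / 2)]⟩)
  calc L ≤ f r (genCoweight A x u) + ε := by linarith [min_le_right (δ / 2) (ε / 2)]
    _ ≤ _ := by gcongr; exact le_ciSup hbdd u

end IsDCat

/-- the weight `φ` generated by a biCauchy net is Cauchy: the generated
coweight `ψ` is left adjoint to it, i.e. `ψ ∘ φ ≤ A` and `φ ∘ ψ ≥ tφ`. -/
theorem stmt13 (f : ℝ → ℝ → ℝ) (ht : IsContTNorm f)
    {α : Type*} (A : α → α → ℝ) (hA : IsDCat f A)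
    {Λ : Type*} [Nonempty Λ] [SemilatticeSup Λ] (x : Λ → α)
    (hbi : BiCauchy A x) :
    (∀ u v : α,
        f (tres f (genType A x) (genCoweight A x v)) (genWeight A x u) ≤ A u v) ∧
    genType A x ≤
      ⨆ u : α, f (tres f (A u u) (genWeight A x u)) (genCoweight A x u) := by
  obtain ⟨L, hL⟩ := hbi
  exact ⟨hA.genCoweight_comp_genWeight_le ht (hL.comp tendsto_atTop_diagonal),
    hA.genType_le_genWeight_comp_genCoweight ht hL⟩
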